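/- Each p-flattening step strictly decreases the number of positive occurrences of p in bodies of rules whose head is not p; hence for any p ∈ flat(S₀) there is a finite sequence S₀ ⇀ₚ S₁ ⇀ₚ ... ⇀ₚ Sₙ with p ∉ flat(Sₙ). -/
import Mathlib


structure FRule (P : Type*) where
  head : P
  bpos : Finset P
  bneg : Finset P
deriving DecidableEq

variable {P : Type*} [DecidableEq P]

def ren (p p' q : P) : P := if q = p then p' else q

def renRule (p p' : P) (r : FRule P) : FRule P :=
  ⟨ren p p' r.head, r.bpos.image (ren p p'), r.bneg.image (ren p p')⟩

def Fresh (p' : P) (S : Finset (FRule P)) : Prop :=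
  ∀ r ∈ S, r.head ≠ p' ∧ p' ∉ r.bpos ∧ p' ∉ r.bneg

def flat (S : Finset (FRule P)) : Set P :=
  {p | ∃ c1 ∈ S, ∃ c2 ∈ S, p ∈ c1.bpos ∧ p ∈ c2.bneg ∧ c1.head ≠ p}

def FlatStep (S : Finset (FRule P)) (p p' : P) (S' : Finset (FRule P)) : Prop :=
  Fresh p' S ∧
  ∃ c1 ∈ S, ∃ c2 ∈ S, p ∈ c1.bpos ∧ p ∈ c2.bneg ∧ c1.head ≠ p ∧
    S' = (S.erase c1) ∪ {renRule p p' c1} ∪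
          (S.filter (fun c => c.head = p)).image (renRule p p')

/-- Number of positive body occurrences of p in rules whose head is not p. -/
def posMeasure (S : Finset (FRule P)) (p : P) : ℕ :=
  (S.filter (fun c => c.head ≠ p ∧ p ∈ c.bpos)).card

lemma flat_decrease (p : P) (S S' : Finset (FRule P)) (p' : P)
    (h : FlatStep S p p' S') : posMeasure S' p < posMeasure S p := by
  obtain ⟨hF, c1, hc1, c2, hc2, hp1, hp2, hh, hS'⟩ := h
  have hp'p : p' ≠ p := fun e => (hF c2 hc2).2.2 (e ▸ hp2)
  have hren : ∀ r : FRule P, p ∉ (renRule p p' r).bpos := by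
    intro r hr
    simp only [renRule, Finset.mem_image] at hr
    obtain ⟨a, _, ha⟩ := hr
    rcases eq_or_ne a p with h | h
    · rw [ren, if_pos h] at ha; exact hp'p ha
    · rw [ren, if_neg h] at ha; exact h ha
  have key : S'.filter (fun c => c.head ≠ p ∧ p ∈ c.bpos)
      = (S.filter (fun c => c.head ≠ p ∧ p ∈ c.bpos)).erase c1 := by
    rw [hS', Finset.filter_union, Finset.filter_union, Finset.filter_erase]
    have h1 : ({renRule p p' c1} : Finset (FRule P)).filter
        (fun c => c.head ≠ p ∧ p ∈ c.bpos) = ∅ := by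
      rw [Finset.filter_eq_empty_iff]
      intro r hr
      simp only [Finset.mem_singleton] at hr
      subst hr
      exact fun h => hren _ h.2
    have h2 : ((S.filter (fun c => c.head = p)).image (renRule p p')).filter
        (fun c => c.head ≠ p ∧ p ∈ c.bpos) = ∅ := by
      rw [Finset.filter_eq_empty_iff]
      intro r hr
      simp only [Finset.mem_image] at hr
      obtain ⟨a, _, ha⟩ := hr
      subst ha
      exact fun h => hren _ h.2
    rw [h1, h2, Finset.union_empty, Finset.union_empty]
  have hc1f : c1 ∈ S.filter (fun c => c.head ≠ p ∧ p ∈ c.bpos) :=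
    Finset.mem_filter.2 ⟨hc1, hh, hp1⟩
  unfold posMeasure
  rw [key, Finset.card_erase_of_mem hc1f]
  exact Nat.sub_lt (Finset.card_pos.2 ⟨c1, hc1f⟩) one_pos

lemma flat_step_exists [Infinite P] (p : P) (S : Finset (FRule P)) (h : p ∈ flat S) :
    ∃ p' S', FlatStep S p p' S' := by
  simp only [flat, Set.mem_setOf_eq] at h
  obtain ⟨c1, hc1, c2, hc2, hp1, hp2, hh⟩ := h
  obtain ⟨p', hp'⟩ := Infinite.exists_notMem_finset
    (S.biUnion (fun r => {r.head} ∪ r.bpos ∪ r.bneg))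
  refine ⟨p', _, ?_, c1, hc1, c2, hc2, hp1, hp2, hh, rfl⟩
  intro r hr
  have hnot : p' ∉ ({r.head} ∪ r.bpos ∪ r.bneg : Finset P) :=
    fun h => hp' (Finset.mem_biUnion.2 ⟨r, hr, h⟩)
  refine ⟨?_, ?_, ?_⟩
  · intro e; exact hnot (by simp [← e])
  · intro e; exact hnot (by simp [e])
  · intro e; exact hnot (by simp [e])

lemma flat_terminates [Infinite P] (p : P) (S₀ : Finset (FRule P)) (h : p ∈ flat S₀) :
    ∃ n > 0, ∃ f : ℕ → Finset (FRule P), f 0 = S₀ ∧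
      (∀ i < n, ∃ p', FlatStep (f i) p p' (f (i + 1))) ∧
      p ∉ flat (f n) := by
  generalize hm : posMeasure S₀ p = m
  induction m using Nat.strong_induction_on generalizing S₀ with
  | _ m ih =>
    obtain ⟨p', S₁, hstep⟩ := flat_step_exists p S₀ h
    by_cases h1 : p ∈ flat S₁
    · obtain ⟨n, hn, f, hf0, hfs, hfn⟩ :=
        ih (posMeasure S₁ p) (hm ▸ flat_decrease p S₀ S₁ p' hstep) S₁ h1 rfl
      refine ⟨n + 1, Nat.succ_pos n, fun i => if i = 0 then S₀ else f (i - 1),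
        by simp, ?_, ?_⟩
      · intro i hi
        rcases Nat.eq_zero_or_pos i with rfl | hpos
        · simpa [hf0] using ⟨p', hstep⟩
        · obtain ⟨j, rfl⟩ := Nat.exists_eq_succ_of_ne_zero (Nat.pos_iff_ne_zero.mp hpos)
          simpa using hfs j (by omega)
      · simpa using hfn
    · refine ⟨1, one_pos, fun i => if i = 0 then S₀ else S₁, by simp, ?_, by simpa⟩
      intro i hi
      interval_cases i
      simpa using ⟨p', hstep⟩

theorem flatStep_decreases_and_terminates [Infinite P] (p : P) :
    (∀ (S S' : Finset (FRule P)) (p' : P),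
        FlatStep S p p' S' → posMeasure S' p < posMeasure S p) ∧
    (∀ S₀ : Finset (FRule P), p ∈ flat S₀ →
      ∃ n > 0, ∃ f : ℕ → Finset (FRule P), f 0 = S₀ ∧
        (∀ i < n, ∃ p', FlatStep (f i) p p' (f (i + 1))) ∧
        p ∉ flat (f n)) :=
  ⟨fun S S' p' h => flat_decrease p S S' p' h,
   fun S₀ h => flat_terminates p S₀ h⟩
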